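/- arXiv:1909.08589 — 8 statements merged into one kernel-verified Lean document; each statement's English description precedes it below -/
import Mathlib

section
/- The limit as q tends to 1 from below of the sum over k ≥ 1 of (−1)^k · q^{k²} equals −1/2. -/
/-!
Write `θ(t) = ∑_{n ∈ ℤ} e^{-π t n²}`. For `q = e^{-π t}` the alternating theta series
`∑_{n ∈ ℤ} (-1)^n q^{n²}` equals `2 θ(4t) - θ(t)` (even `n` counted twice), so
`∑_{k ≥ 1} (-1)^k q^{k²} = (2 θ(4t) - θ(t) - 1) / 2`, and `q → 1⁻` means `t → 0⁺`.
The Poisson summation formula `θ(t) = θ(1/t) / √t` turns `2 θ(4t) - θ(t)` into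
`(θ(1/(4t)) - θ(1/t)) / √t`, which lies between `0` and
`(θ(1/(4t)) - 1) / √t = O(t^{-1/2} e^{-π/(4t)})`, hence tends to `0`.
-/

open Real Filter Topology Set Asymptotics

noncomputable def theta (t : ℝ) : ℝ := ∑' n : ℤ, rexp (-π * t * n ^ 2)

lemma summable_exp_neg_mul_int_sq {t : ℝ} (ht : 0 < t) :
    Summable fun n : ℤ => rexp (-π * t * n ^ 2) := by
  simpa [mul_assoc] using summable_pow_mul_jacobiTheta₂_term_bound 0 ht 0

lemma theta_eq_theta_inv_div_sqrt {t : ℝ} (ht : 0 < t) : theta t = theta t⁻¹ / √t := by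
  rw [theta, theta, Real.tsum_exp_neg_mul_int_sq ht, sqrt_eq_rpow, one_div_mul_eq_div]
  simp only [div_eq_mul_inv]

lemma one_le_theta {t : ℝ} (ht : 0 < t) : 1 ≤ theta t := by
  simpa [theta] using (summable_exp_neg_mul_int_sq ht).le_tsum 0 fun n _ => (exp_pos _).le

lemma theta_le_theta {s t : ℝ} (hs : 0 < s) (hst : s ≤ t) : theta t ≤ theta s := by
  refine (summable_exp_neg_mul_int_sq (hs.trans_le hst)).tsum_le_tsum (fun n => ?_)
    (summable_exp_neg_mul_int_sq hs)
  have := mul_nonneg (mul_nonneg pi_pos.le (sub_nonneg.2 hst)) (sq_nonneg (n : ℝ))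
  exact exp_le_exp.mpr (by linarith)

lemma ofReal_theta (t : ℝ) : (theta t : ℂ) = jacobiTheta (t * Complex.I) := by
  rw [theta, Complex.ofReal_tsum, jacobiTheta]
  refine tsum_congr fun n => ?_
  push_cast
  congr 1
  linear_combination -(π * n ^ 2 * t : ℂ) * Complex.I_sq

lemma isBigO_theta_sub_one : (fun t => theta t - 1) =O[atTop] fun t => rexp (-π * t) := by
  have hI : Tendsto (fun t : ℝ => (t : ℂ) * Complex.I) atTop (comap Complex.im atTop) :=
    tendsto_comap_iff.mpr <| tendsto_id.congr fun t => by simp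
  refine isBigO_norm_left.mp ?_
  simpa [← ofReal_theta, ← Complex.ofReal_one, ← Complex.ofReal_sub, Complex.norm_real,
    Function.comp_def] using (isBigO_at_im_infty_jacobiTheta_sub_one.comp_tendsto hI).norm_left

lemma tendsto_sqrt_mul_theta_sub_one : Tendsto (fun t => √t * (theta t - 1)) atTop (𝓝 0) := by
  refine ((isBigO_refl (fun t => √t) atTop).mul isBigO_theta_sub_one).trans_tendsto ?_
  simpa [sqrt_eq_rpow] using tendsto_rpow_mul_exp_neg_mul_atTop_nhds_zero (1 / 2) π pi_pos

lemma tsum_neg_one_zpow_mul {f : ℤ → ℝ} (hf : Summable f) :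
    ∑' n, (-1 : ℝ) ^ n * f n = 2 * ∑' n, f (2 * n) - ∑' n, f n := by
  have hinj : Function.Injective fun n : ℤ => 2 * n := mul_right_injective₀ two_ne_zero
  have hevens : HasSum (fun n => ((-1 : ℝ) ^ n + 1) * f n) (2 * ∑' n, f (2 * n)) := by
    refine (hinj.hasSum_iff fun n hn => ?_).mp ?_
    · have hodd : Odd n :=
        Int.not_even_iff_odd.mp fun ⟨m, hm⟩ => hn ⟨m, by dsimp only; omega⟩
      rw [hodd.neg_one_zpow]
      ring
    · refine ((hf.comp_injective hinj).hasSum.mul_left 2).congr_fun fun n => ?_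
      simp [(even_two_mul n).neg_one_zpow, one_add_one_eq_two]
  exact ((hevens.sub hf.hasSum).congr_fun fun n => by ring).tsum_eq

lemma tsum_int_eq_zero_add_two_mul_tsum_succ {f : ℤ → ℝ} (heven : f.Even) (hf : Summable f) :
    ∑' n, f n = f 0 + 2 * ∑' k : ℕ, f (k + 1) := by
  rw [tsum_int_eq_zero_add_two_mul_tsum_pnat heven hf, nsmul_eq_mul, Nat.cast_ofNat,
    tsum_pnat_eq_tsum_succ (f := fun k : ℕ => f k)]
  push_cast
  rfl

lemma tsum_neg_one_pow_mul_pow_succ_sq {t : ℝ} (ht : 0 < t) :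
    ∑' k : ℕ, (-1 : ℝ) ^ (k + 1) * rexp (-π * t) ^ ((k + 1) ^ 2)
      = (2 * theta (4 * t) - theta t - 1) / 2 := by
  set g : ℤ → ℝ := fun n => (-1 : ℝ) ^ n * rexp (-π * t * n ^ 2)
  have hg : Summable g := (summable_exp_neg_mul_int_sq ht).of_norm_bounded fun n => by
    simp [g]
  have hg_even : g.Even := fun n => by simp [g, zpow_neg, ← inv_zpow]
  have hg0 : g 0 = 1 := by simp [g]
  have h_succ : ∀ k : ℕ, g (k + 1) = (-1 : ℝ) ^ (k + 1) * rexp (-π * t) ^ ((k + 1) ^ 2) := by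
    intro k
    simp only [g, ← exp_nat_mul]
    rw [← Nat.cast_add_one, zpow_natCast]
    push_cast
    ring_nf
  have h_evens : ∑' n : ℤ, rexp (-π * t * ((2 * n : ℤ) : ℝ) ^ 2) = theta (4 * t) :=
    tsum_congr fun n => by push_cast; ring_nf
  have h_alt : ∑' n, g n = 2 * theta (4 * t) - theta t := by
    rw [tsum_neg_one_zpow_mul (summable_exp_neg_mul_int_sq ht), h_evens]
    rfl
  have h_fold := tsum_int_eq_zero_add_two_mul_tsum_succ hg_even hg
  simp only [hg0, h_succ] at h_fold
  linarith

lemma sqrt_four_mul (t : ℝ) : √(4 * t) = 2 * √t := by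
  rw [sqrt_mul zero_le_four, show (4 : ℝ) = 2 ^ 2 by norm_num, sqrt_sq zero_le_two]

lemma two_mul_theta_four_mul_sub_theta {t : ℝ} (ht : 0 < t) :
    2 * theta (4 * t) - theta t = (theta (4 * t)⁻¹ - theta t⁻¹) / √t := by
  rw [theta_eq_theta_inv_div_sqrt ht, theta_eq_theta_inv_div_sqrt (by positivity : 0 < 4 * t),
    sqrt_four_mul]
  field_simp

lemma tendsto_two_mul_theta_four_mul_sub_theta :
    Tendsto (fun t => 2 * theta (4 * t) - theta t) (𝓝[>] 0) (𝓝 0) := by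
  have hs : Tendsto (fun t : ℝ => (4 * t)⁻¹) (𝓝[>] 0) atTop := by
    simpa only [mul_inv] using
      tendsto_inv_nhdsGT_zero.const_mul_atTop (by norm_num : (0 : ℝ) < 4⁻¹)
  have hbound := (tendsto_sqrt_mul_theta_sub_one.comp hs).const_mul 2
  rw [mul_zero] at hbound
  refine squeeze_zero' ?_ ?_ hbound
  · filter_upwards [self_mem_nhdsWithin] with t (ht : 0 < t)
    rw [two_mul_theta_four_mul_sub_theta ht]
    exact div_nonneg (sub_nonneg.2 (theta_le_theta (by positivity)
      (inv_anti₀ (by positivity) (by linarith)))) (sqrt_nonneg _)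
  · filter_upwards [self_mem_nhdsWithin] with t (ht : 0 < t)
    rw [two_mul_theta_four_mul_sub_theta ht, Function.comp_apply, sqrt_inv, sqrt_four_mul]
    calc (theta (4 * t)⁻¹ - theta t⁻¹) / √t ≤ (theta (4 * t)⁻¹ - 1) / √t := by
          gcongr
          exact one_le_theta (inv_pos.2 ht)
      _ = 2 * ((2 * √t)⁻¹ * (theta (4 * t)⁻¹ - 1)) := by field_simp

lemma tendsto_neg_log_div_pi_nhdsLT_one :
    Tendsto (fun q => -log q / π) (𝓝[<] 1) (𝓝[>] 0) := by
  refine tendsto_nhdsWithin_iff.2 ⟨?_, ?_⟩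
  · simpa using ((continuousAt_log one_ne_zero).neg.div_const π).tendsto.mono_left
      (nhdsWithin_le_nhds (s := Iio 1))
  · filter_upwards [Ioo_mem_nhdsLT one_pos] with q ⟨hq0, hq1⟩
    exact div_pos (neg_pos.2 (log_neg hq0 hq1)) pi_pos

theorem theta_series_limit :
    Filter.Tendsto (fun q : ℝ => ∑' k : ℕ, (-1 : ℝ) ^ (k + 1) * q ^ ((k + 1) ^ 2))
      (nhdsWithin 1 (Set.Iio 1)) (nhds (-1 / 2)) := by
  have hlim := ((tendsto_two_mul_theta_four_mul_sub_theta.comp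
    tendsto_neg_log_div_pi_nhdsLT_one).sub_const 1).div_const 2
  rw [zero_sub] at hlim
  refine hlim.congr' ?_
  filter_upwards [Ioo_mem_nhdsLT one_pos] with q ⟨hq0, hq1⟩
  have ht : 0 < -log q / π := div_pos (neg_pos.2 (log_neg hq0 hq1)) pi_pos
  have hq : rexp (-π * (-log q / π)) = q := by
    rw [show -π * (-log q / π) = log q by field_simp, exp_log hq0]
  rw [Function.comp_apply, ← tsum_neg_one_pow_mul_pow_succ_sq ht, hq]
end

section
/- Define a(t) := −1/π + (2/π)·∑_{k=1}^∞ (−1)^{k+1} e^{−t k²} for t > 0. Then lim_{t→0⁺} a(t) = 0 and lim_{t→∞} a(t) = −1/π. -/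
/-!
With `K := cosKernel (1 / 2)`, i.e. `K x = ∑_{n ∈ ℤ} (-1)ⁿ exp (-π n² x)`, the function is
`t ↦ -K (t / π) / π`. As `x → ∞` only the term `n = 0` survives, so `K x → 1`. As `x → 0⁺`, the
theta transformation `K x = x^(-1/2) ∑_{n ∈ ℤ} exp (-π (n + 1/2)² / x)` gives `K x → 0`, because
no term of the dual sum has `n + 1/2 = 0`, so it decays exponentially in `1 / x`.
-/

open Real Filter Topology HurwitzZeta

lemma tsum_neg_one_pow_mul_exp_eq_cosKernel_half {t : ℝ} (ht : 0 < t) :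
    ∑' k : ℕ, (-1 : ℝ) ^ k * exp (-t * ((k : ℝ) + 1) ^ 2) =
      (1 - cosKernel (1 / 2 : ℝ) (t / π)) / 2 := by
  have hsum := hasSum_nat_cosKernel₀ (1 / 2) (div_pos ht pi_pos)
  have hterm (k : ℕ) : 2 * cos (2 * π * (1 / 2) * (k + 1)) * exp (-π * (k + 1) ^ 2 * (t / π)) =
      -2 * ((-1 : ℝ) ^ k * exp (-t * ((k : ℝ) + 1) ^ 2)) := by
    have hcos : cos (2 * π * (1 / 2) * (k + 1)) = -(-1) ^ k := by
      rw [show 2 * π * (1 / 2) * (k + 1) = ((k + 1 : ℕ) : ℝ) * π by push_cast; ring,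
        cos_nat_mul_pi, pow_succ]
      ring
    rw [hcos, show -π * (k + 1) ^ 2 * (t / π) = -t * ((k : ℝ) + 1) ^ 2 by field_simp]
    ring
  simp only [hterm] at hsum
  have h := hsum.tsum_eq
  rw [tsum_mul_left] at h
  linarith

lemma tendsto_cosKernel_atTop (a : UnitAddCircle) : Tendsto (cosKernel a) atTop (𝓝 1) := by
  obtain ⟨p, hp, hO⟩ := isBigO_atTop_cosKernel_sub a
  have hexp : Tendsto (fun x => exp (-p * x)) atTop (𝓝 0) := by
    simpa using tendsto_rpow_mul_exp_neg_mul_atTop_nhds_zero 0 p hp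
  simpa using (hO.trans_tendsto hexp).add_const 1

lemma tendsto_cosKernel_nhdsGT_zero {a : UnitAddCircle} (ha : a ≠ 0) :
    Tendsto (cosKernel a) (𝓝[>] 0) (𝓝 0) := by
  obtain ⟨p, hp, hO⟩ := isBigO_atTop_evenKernel_sub a
  simp only [ha, if_false, sub_zero] at hO
  have hdecay : Tendsto (fun y => y ^ (1 / 2 : ℝ) * evenKernel a y) atTop (𝓝 0) :=
    ((Asymptotics.isBigO_refl _ _).mul hO).trans_tendsto
      (tendsto_rpow_mul_exp_neg_mul_atTop_nhds_zero (1 / 2) p hp)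
  refine (hdecay.comp tendsto_inv_nhdsGT_zero).congr' ?_
  filter_upwards [self_mem_nhdsWithin] with x (hx : 0 < x)
  rw [Function.comp_apply, evenKernel_functional_equation, ← mul_assoc,
    mul_one_div_cancel (by positivity), one_mul, one_div, inv_inv]

lemma unitAddCircle_coe_half_ne_zero : ((1 / 2 : ℝ) : UnitAddCircle) ≠ 0 := by
  rw [Ne, AddCircle.coe_eq_zero_iff_of_mem_Ico (by norm_num)]
  norm_num

theorem kernel_limits :
    Filter.Tendsto
      (fun t : ℝ => -1 / Real.pi +
        (2 / Real.pi) * ∑' k : ℕ, (-1 : ℝ) ^ k * Real.exp (-t * ((k : ℝ) + 1) ^ 2))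
      (nhdsWithin 0 (Set.Ioi 0)) (nhds 0) ∧
    Filter.Tendsto
      (fun t : ℝ => -1 / Real.pi +
        (2 / Real.pi) * ∑' k : ℕ, (-1 : ℝ) ^ k * Real.exp (-t * ((k : ℝ) + 1) ^ 2))
      Filter.atTop (nhds (-1 / Real.pi)) := by
  have hkernel (t : ℝ) (ht : 0 < t) : -cosKernel (1 / 2 : ℝ) (t / π) / π =
      -1 / π + 2 / π * ∑' k : ℕ, (-1 : ℝ) ^ k * exp (-t * ((k : ℝ) + 1) ^ 2) := by
    rw [tsum_neg_one_pow_mul_exp_eq_cosKernel_half ht]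
    field_simp
    ring
  have hscale : Tendsto (· / π) (𝓝[>] (0 : ℝ)) (𝓝[>] 0) := by
    have h := (continuous_id.div_const π).continuousWithinAt.tendsto_nhdsWithin (x := 0)
      (s := Set.Ioi 0) (t := Set.Ioi 0) fun t (ht : 0 < t) => div_pos ht pi_pos
    rwa [id, zero_div] at h
  constructor
  · have h := ((tendsto_cosKernel_nhdsGT_zero unitAddCircle_coe_half_ne_zero).comp
      hscale).neg.div_const π
    rw [neg_zero, zero_div] at h
    exact h.congr' (eventually_nhdsWithin_of_forall hkernel)
  · have h := ((tendsto_cosKernel_atTop ((1 / 2 : ℝ) : UnitAddCircle)).comp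
      (tendsto_id.atTop_div_const pi_pos)).neg.div_const π
    exact h.congr' ((eventually_gt_atTop 0).mono hkernel)
end

section
/- For every real frequency ω, the Fourier transform of the shifted kernel a_s (extended by 0 on t < 0) satisfies â_s(ω) = ∫_0^∞ e^{−iωt} a_s(t) dt = (2/π)·∑_{k=1}^∞ (−1)^{k+1} (k² − iω)/(k⁴ + ω²). -/
open Complex MeasureTheory

/-! Each term of the kernel is a decaying exponential `e^{-t k²}`, whose transform on `(0, ∞)` is
`1 / (k² + iω) = (k² - iω) / (k⁴ + ω²)`. Summation and integration may be interchanged because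
the absolute values of the terms have integrals `1 / k²`, which are summable. -/

theorem integral_Ioi_cexp_neg_mul {c : ℂ} (hc : 0 < c.re) :
    ∫ t in Set.Ioi (0 : ℝ), cexp (-c * t) = 1 / c := by
  rw [integral_exp_mul_complex_Ioi (by simpa using hc)]
  simp [neg_div]

theorem integral_Ioi_exp_neg_mul {b : ℝ} (hb : 0 < b) :
    ∫ t in Set.Ioi (0 : ℝ), Real.exp (-b * t) = 1 / b := by
  rw [integral_exp_mul_Ioi (by simpa using hb)]
  simp [neg_div]

theorem cexp_neg_I_mul_mul_exp_neg_mul (ω b t : ℝ) :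
    cexp (-I * ω * t) * (Real.exp (-t * b) : ℂ) = cexp (-(b + I * ω) * t) := by
  rw [ofReal_exp, ← Complex.exp_add]
  push_cast
  ring_nf

theorem norm_cexp_neg_I_mul_mul_exp_neg_mul (ω b t : ℝ) :
    ‖cexp (-I * ω * t) * (Real.exp (-t * b) : ℂ)‖ = Real.exp (-b * t) := by
  simp [Complex.norm_exp, mul_comm]

theorem one_div_ofReal_add_I_mul {b : ℝ} (hb : b ≠ 0) (ω : ℝ) :
    1 / ((b : ℂ) + I * ω) = (b - I * ω) / ((b : ℂ) ^ 2 + (ω : ℂ) ^ 2) := by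
  have hsum : (b : ℂ) ^ 2 + (ω : ℂ) ^ 2 ≠ 0 := by
    exact_mod_cast (by positivity : b ^ 2 + ω ^ 2 ≠ 0)
  have hfac : (b : ℂ) + I * ω ≠ 0 := fun h => hb (by simpa using congrArg re h)
  rw [div_eq_div_iff hfac hsum]
  linear_combination (ω : ℂ) ^ 2 * I_sq

theorem integral_Ioi_cexp_mul_tsum_exp {a b : ℕ → ℝ} (hb : ∀ k, 0 < b k)
    (hab : Summable fun k => |a k| / b k) (ω : ℝ) :
    ∫ t in Set.Ioi (0 : ℝ), cexp (-I * ω * t) * ((∑' k, a k * Real.exp (-t * b k) : ℝ) : ℂ) =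
      ∑' k, (a k : ℂ) / (b k + I * ω) := by
  set F : ℕ → ℝ → ℂ := fun k t => a k * (cexp (-I * ω * t) * (Real.exp (-t * b k) : ℂ))
  have hre : ∀ k, 0 < ((b k : ℂ) + I * ω).re := by simpa using hb
  have hF : ∀ k, F k = fun t : ℝ => a k * cexp (-(b k + I * ω) * t) := fun k => by
    simp only [F, cexp_neg_I_mul_mul_exp_neg_mul]
  have hF_int : ∀ k, IntegrableOn (F k) (Set.Ioi 0) := fun k => by
    rw [hF]
    exact (integrableOn_exp_mul_complex_Ioi (by simpa using hre k) 0).const_mul _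
  have hF_norm : ∀ k, ∫ t in Set.Ioi (0 : ℝ), ‖F k t‖ = |a k| / b k := fun k => by
    simp only [F, norm_mul (a k : ℂ), norm_real, Real.norm_eq_abs,
      norm_cexp_neg_I_mul_mul_exp_neg_mul]
    rw [integral_const_mul, integral_Ioi_exp_neg_mul (hb k), mul_one_div]
  calc ∫ t in Set.Ioi (0 : ℝ), cexp (-I * ω * t) * ((∑' k, a k * Real.exp (-t * b k) : ℝ) : ℂ)
      = ∫ t in Set.Ioi (0 : ℝ), ∑' k, F k t := by
        congr 1 with t
        simp only [F, ofReal_tsum, ← tsum_mul_left, ofReal_mul]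
        ring_nf
    _ = ∑' k, ∫ t in Set.Ioi (0 : ℝ), F k t :=
        (integral_tsum_of_summable_integral_norm hF_int (by simpa only [hF_norm])).symm
    _ = ∑' k, (a k : ℂ) / (b k + I * ω) := by
        congr 1 with k
        rw [hF, integral_const_mul, integral_Ioi_cexp_neg_mul (hre k), mul_one_div]

theorem shifted_kernel_fourier (ω : ℝ) :
    ∫ t in Set.Ioi (0 : ℝ),
        Complex.exp (-Complex.I * ω * t) *
          ((2 / Real.pi) * ∑' k : ℕ, (-1 : ℝ) ^ k * Real.exp (-t * ((k : ℝ) + 1) ^ 2) : ℝ) =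
      (2 / Real.pi) * ∑' k : ℕ, (-1 : ℂ) ^ k *
        (((k : ℂ) + 1) ^ 2 - Complex.I * ω) / (((k : ℂ) + 1) ^ 4 + (ω : ℂ) ^ 2) := by
  have hsq : ∀ k : ℕ, 0 < ((k : ℝ) + 1) ^ 2 := fun k => by positivity
  have hsummable : Summable fun k : ℕ => |2 / Real.pi * (-1) ^ k| / ((k : ℝ) + 1) ^ 2 := by
    have := ((summable_nat_add_iff 1).mpr
      (Real.summable_one_div_nat_pow.mpr one_lt_two)).mul_left (2 / Real.pi)
    simpa [abs_of_pos Real.pi_pos, div_eq_mul_inv] using this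
  simp_rw [← tsum_mul_left, ← mul_assoc]
  rw [integral_Ioi_cexp_mul_tsum_exp hsq hsummable]
  congr 1 with k
  rw [div_eq_mul_one_div, one_div_ofReal_add_I_mul (hsq k).ne']
  push_cast
  ring
end

section
/- Fix α ∈ (0, 4/π) and define r_α(μ) := (α²/4 − μ²)·sinh(μπ)/α for μ ∈ ℝ. Then the only solution of μ = r_α(μ) with μ ∈ [0, α/2] is μ = 0. -/
/-!
Put `x = μπ` and `a = απ/2`, so that `0 < a < 2` and the equation reads
`2ax = (a² - x²) sinh x`. The elementary bound `(4 - x²) sinh x ≤ 4x` for `x ≥ 0` (the Taylor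
coefficients of `x / (1 - x²/4)` dominate those of `sinh x`; it is proved by differentiating
twice) gives
`(4 - x²)(a² - x²) sinh x ≤ 4x(a² - x²) < 2ax(4 - x²)` for `0 < x ≤ a < 2`,
the last step being `(2 - a)(2a + x²) > 0`; so no `μ ∈ (0, α/2]` solves the equation.
-/

open Real Set

lemma le_of_hasDerivAt_nonneg_of_le {f f' : ℝ → ℝ} {a x : ℝ}
    (hf : ∀ y, HasDerivAt f (f' y) y) (hf' : ∀ y, a ≤ y → 0 ≤ f' y) (hx : a ≤ x) :
    f a ≤ f x :=
  monotoneOn_of_hasDerivWithinAt_nonneg (convex_Ici a)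
    (fun y _ ↦ (hf y).continuousAt.continuousWithinAt) (fun y _ ↦ (hf y).hasDerivWithinAt)
    (fun y hy ↦ hf' y (interior_subset hy)) self_mem_Ici hx hx

lemma Real.sinh_le_mul_cosh {x : ℝ} (hx : 0 ≤ x) : sinh x ≤ x * cosh x := by
  have hderiv (y : ℝ) : HasDerivAt (fun y ↦ y * cosh y - sinh y) (y * sinh y) y :=
    ((hasDerivAt_id y).mul (hasDerivAt_cosh y)).sub (hasDerivAt_sinh y) |>.congr_deriv
      (by simp)
  have := le_of_hasDerivAt_nonneg_of_le hderiv
    (fun y hy ↦ mul_nonneg hy (sinh_nonneg_iff.mpr hy)) hx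
  simp only [zero_mul, sinh_zero, sub_zero] at this
  linarith

lemma Real.four_sub_sq_mul_sinh_le {x : ℝ} (hx : 0 ≤ x) : (4 - x ^ 2) * sinh x ≤ 4 * x := by
  have hsq (y : ℝ) : HasDerivAt (fun y ↦ 4 - y ^ 2) (-(2 * y)) y :=
    (hasDerivAt_pow 2 y).const_sub 4 |>.congr_deriv (by ring)
  have hderiv₂ (y : ℝ) : HasDerivAt (fun y ↦ 4 + 2 * y * sinh y - (4 - y ^ 2) * cosh y)
      ((y ^ 2 - 2) * sinh y + 4 * y * cosh y) y :=
    ((((hasDerivAt_id y).const_mul 2).mul (hasDerivAt_sinh y)).const_add 4).sub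
      ((hsq y).mul (hasDerivAt_cosh y)) |>.congr_deriv (by simp only [id]; ring)
  have hderiv (y : ℝ) : HasDerivAt (fun y ↦ 4 * y - (4 - y ^ 2) * sinh y)
      (4 + 2 * y * sinh y - (4 - y ^ 2) * cosh y) y :=
    ((hasDerivAt_id y).const_mul 4).sub ((hsq y).mul (hasDerivAt_sinh y)) |>.congr_deriv
      (by ring)
  have hderiv_nonneg (y : ℝ) (hy : 0 ≤ y) : 0 ≤ 4 + 2 * y * sinh y - (4 - y ^ 2) * cosh y := by
    have hderiv₂_nonneg (z : ℝ) (hz : 0 ≤ z) : 0 ≤ (z ^ 2 - 2) * sinh z + 4 * z * cosh z := by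
      have := sinh_nonneg_iff.mpr hz
      nlinarith [sinh_le_mul_cosh hz, mul_nonneg (sq_nonneg z) this]
    simpa using le_of_hasDerivAt_nonneg_of_le hderiv₂ hderiv₂_nonneg hy
  have := le_of_hasDerivAt_nonneg_of_le hderiv hderiv_nonneg hx
  simp only [mul_zero, sinh_zero, sub_zero] at this
  linarith

lemma Real.sq_sub_sq_mul_sinh_lt {a x : ℝ} (hx : 0 < x) (hxa : x ≤ a) (ha : a < 2) :
    (a ^ 2 - x ^ 2) * sinh x < 2 * a * x := by
  have hsinh := four_sub_sq_mul_sinh_le hx.le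
  have hfactor : 0 ≤ a ^ 2 - x ^ 2 := by nlinarith
  have hfour : 0 < 4 - x ^ 2 := by nlinarith
  have hmargin : 0 < x * ((2 - a) * (2 * a + x ^ 2)) := by
    have : 0 < a := hx.trans_le hxa
    positivity
  refine lt_of_mul_lt_mul_left ?_ hfour.le
  calc (4 - x ^ 2) * ((a ^ 2 - x ^ 2) * sinh x)
      = (a ^ 2 - x ^ 2) * ((4 - x ^ 2) * sinh x) := by ring
    _ ≤ (a ^ 2 - x ^ 2) * (4 * x) := mul_le_mul_of_nonneg_left hsinh hfactor
    _ < (4 - x ^ 2) * (2 * a * x) := by nlinarith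

theorem char_eq_only_zero (α : ℝ) (hα0 : 0 < α) (hα : α < 4 / Real.pi)
    (μ : ℝ) (hμ : μ ∈ Set.Icc (0 : ℝ) (α / 2))
    (heq : μ = (α ^ 2 / 4 - μ ^ 2) * Real.sinh (μ * Real.pi) / α) :
    μ = 0 := by
  obtain ⟨hμ0, hμα⟩ := hμ
  by_contra hne
  have hμpos : 0 < μ := lt_of_le_of_ne hμ0 (Ne.symm hne)
  have ha : α * π / 2 < 2 := by
    have := (lt_div_iff₀ pi_pos).mp hα
    linarith
  have hxa : μ * π ≤ α * π / 2 := by nlinarith [pi_pos]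
  have hlt := sq_sub_sq_mul_sinh_lt (mul_pos hμpos pi_pos) hxa ha
  have heq' : μ * α = (α ^ 2 / 4 - μ ^ 2) * sinh (μ * π) := (eq_div_iff hα0.ne').mp heq
  have hrescaled : ((α * π / 2) ^ 2 - (μ * π) ^ 2) * sinh (μ * π) = 2 * (α * π / 2) * (μ * π) := by
    rw [show ((α * π / 2) ^ 2 - (μ * π) ^ 2) * sinh (μ * π)
        = π ^ 2 * ((α ^ 2 / 4 - μ ^ 2) * sinh (μ * π)) by ring, ← heq']
    ring
  exact hlt.ne hrescaled
end

section
/- Fix α ∈ (0, 4/π) and define r_α(μ) := (α²/4 − μ²)·sinh(μπ)/α. Then r_α is strictly concave on (0, α/2], i.e. r_α''(μ) < 0 for μ ∈ (0, α/2]. -/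
/-! With t = μπ one has 4α·r_α''(μ) = sinh t · (π²α² − 4t² − 8) − 16 t cosh t. Since απ < 4, the
first term is less than 8 sinh t, and 8 sinh t < 8 t cosh t (that is, tanh t < t for t > 0). -/

open Real

noncomputable def rAlpha (α x : ℝ) : ℝ := (α ^ 2 / 4 - x ^ 2) * sinh (x * π) / α

theorem sinh_lt_mul_cosh {t : ℝ} (ht : 0 < t) : sinh t < t * cosh t := by
  have hmono : StrictMonoOn (fun x : ℝ => x * cosh x - sinh x) (Set.Icc 0 t) := by
    refine strictMonoOn_of_deriv_pos (convex_Icc 0 t) (by fun_prop) fun x hx => ?_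
    rw [interior_Icc] at hx
    have hd : HasDerivAt (fun x : ℝ => x * cosh x - sinh x)
        (1 * cosh x + x * sinh x - cosh x) x :=
      ((hasDerivAt_id' x).mul (hasDerivAt_cosh x)).sub (hasDerivAt_sinh x)
    rw [hd.deriv, one_mul, add_sub_cancel_left]
    exact mul_pos hx.1 (sinh_pos_iff.2 hx.1)
  simpa using hmono (Set.left_mem_Icc.2 ht.le) (Set.right_mem_Icc.2 ht.le) ht

theorem hasDerivAt_sinh_mul_pi (x : ℝ) :
    HasDerivAt (fun x => sinh (x * π)) (cosh (x * π) * π) x := by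
  simpa using ((hasDerivAt_id x).mul_const π).sinh

theorem hasDerivAt_cosh_mul_pi (x : ℝ) :
    HasDerivAt (fun x => cosh (x * π)) (sinh (x * π) * π) x := by
  simpa using ((hasDerivAt_id x).mul_const π).cosh

theorem hasDerivAt_const_sub_sq (c x : ℝ) : HasDerivAt (fun x => c - x ^ 2) (-(2 * x)) x := by
  simpa using (hasDerivAt_pow 2 x).const_sub c

theorem deriv_rAlpha (α : ℝ) :
    deriv (rAlpha α) =
      fun x => (-(2 * x) * sinh (x * π) + (α ^ 2 / 4 - x ^ 2) * (cosh (x * π) * π)) / α := by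
  funext x
  exact (((hasDerivAt_const_sub_sq (α ^ 2 / 4) x).mul
    (hasDerivAt_sinh_mul_pi x)).div_const α).deriv

theorem deriv_deriv_rAlpha (α μ : ℝ) :
    deriv (deriv (rAlpha α)) μ =
      (sinh (μ * π) * (π ^ 2 * (α ^ 2 - 4 * μ ^ 2) - 8) - 16 * π * μ * cosh (μ * π)) / (4 * α) := by
  have hlin : HasDerivAt (fun x : ℝ => -(2 * x)) (-2) μ := by
    simpa [Pi.neg_def] using ((hasDerivAt_id μ).const_mul 2).neg
  have h := ((hlin.mul (hasDerivAt_sinh_mul_pi μ)).add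
    ((hasDerivAt_const_sub_sq (α ^ 2 / 4) μ).mul
      ((hasDerivAt_cosh_mul_pi μ).mul_const π))).div_const α
  rw [deriv_rAlpha]
  exact h.deriv.trans (by ring)

theorem r_alpha_strict_concave (α : ℝ) (hα0 : 0 < α) (hα : α < 4 / Real.pi)
    (μ : ℝ) (hμ : μ ∈ Set.Ioc (0 : ℝ) (α / 2)) :
    deriv (deriv (fun x : ℝ => (α ^ 2 / 4 - x ^ 2) * Real.sinh (x * Real.pi) / α)) μ < 0 := by
  change deriv (deriv (rAlpha α)) μ < 0
  rw [deriv_deriv_rAlpha]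
  refine div_neg_of_neg_of_pos ?_ (by positivity)
  have ht : 0 < μ * π := mul_pos hμ.1 pi_pos
  have hsinh : 0 < sinh (μ * π) := sinh_pos_iff.2 ht
  have hαπ : α * π < 4 := (lt_div_iff₀ pi_pos).1 hα
  have hsq : π ^ 2 * α ^ 2 < 16 := by nlinarith [mul_pos hα0 pi_pos]
  nlinarith [sinh_lt_mul_cosh ht, mul_pos hsinh (sub_pos.2 hsq), mul_pos ht (cosh_pos (μ * π)),
    mul_nonneg (sq_nonneg μ) hsinh.le]
end

section
/- For α > 4/π, the equation μ = (α²/4 − μ²)·sinh(μπ)/α has at least one solution μ in the open interval (0, α/2). -/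
/-!
As `sinh x ≥ x`, the right-hand side satisfies `charRhs α μ ≥ (α ^ 2 / 4 - μ ^ 2) π μ / α`,
which exceeds `μ` as soon as `α ^ 2 / 4 - μ ^ 2 > α / π`; because `α > 4 / π` this holds for all
small `μ > 0`. On the other hand `charRhs α (α / 2) = 0 < α / 2`, so the intermediate value theorem
applied to `μ - charRhs α μ` gives a solution.
-/

open Real Set Filter Topology

noncomputable def charRhs (α μ : ℝ) : ℝ := (α ^ 2 / 4 - μ ^ 2) * sinh (μ * π) / α

lemma continuous_charRhs (α : ℝ) : Continuous (charRhs α) := by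
  unfold charRhs; fun_prop

lemma charRhs_half (α : ℝ) : charRhs α (α / 2) = 0 := by
  unfold charRhs; ring

lemma lt_charRhs {α μ : ℝ} (hα : 0 < α) (hμ : 0 < μ) (hcoef : α / π < α ^ 2 / 4 - μ ^ 2) :
    μ < charRhs α μ := by
  have hsinh : μ * π ≤ sinh (μ * π) := self_le_sinh_iff.mpr (by positivity)
  have hcoef_pos : 0 < α ^ 2 / 4 - μ ^ 2 := lt_trans (by positivity) hcoef
  rw [charRhs, lt_div_iff₀ hα]
  calc μ * α = α / π * (μ * π) := by field_simp
    _ < (α ^ 2 / 4 - μ ^ 2) * (μ * π) := by gcongr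
    _ ≤ (α ^ 2 / 4 - μ ^ 2) * sinh (μ * π) := by gcongr

lemma div_pi_lt_sq_div_four {α : ℝ} (hα : 4 / π < α) : α / π < α ^ 2 / 4 := by
  have hα0 : 0 < α := lt_trans (by positivity) hα
  rw [div_lt_iff₀ pi_pos] at hα
  rw [div_lt_div_iff₀ pi_pos (by norm_num)]
  nlinarith

lemma eventually_lt_charRhs {α : ℝ} (hα : 4 / π < α) : ∀ᶠ μ in 𝓝[>] 0, μ < charRhs α μ := by
  have hα0 : 0 < α := lt_trans (by positivity) hα
  have hcoef : ∀ᶠ μ in 𝓝[>] (0 : ℝ), α / π < α ^ 2 / 4 - μ ^ 2 := by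
    have h : Tendsto (fun μ : ℝ => α ^ 2 / 4 - μ ^ 2) (𝓝 0) (𝓝 (α ^ 2 / 4)) := by
      simpa using (show Continuous fun μ : ℝ => α ^ 2 / 4 - μ ^ 2 by fun_prop).tendsto 0
    exact nhdsWithin_le_nhds (h.eventually (lt_mem_nhds (div_pi_lt_sq_div_four hα)))
  filter_upwards [self_mem_nhdsWithin, hcoef] with μ hμ hμcoef
  exact lt_charRhs hα0 hμ hμcoef

theorem char_eq_has_solution (α : ℝ) (hα : 4 / Real.pi < α) :
    ∃ μ ∈ Set.Ioo (0 : ℝ) (α / 2),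
      μ = (α ^ 2 / 4 - μ ^ 2) * Real.sinh (μ * Real.pi) / α := by
  have hα0 : 0 < α := lt_trans (by positivity) hα
  obtain ⟨μ₀, ⟨hμ₀pos, hμ₀half⟩, hμ₀lt⟩ :=
    (Eventually.and (Ioo_mem_nhdsGT (half_pos hα0)) (eventually_lt_charRhs hα)).exists
  have hsign : (0 : ℝ) ∈ Ioo (μ₀ - charRhs α μ₀) (α / 2 - charRhs α (α / 2)) := by
    rw [charRhs_half]; constructor <;> linarith
  obtain ⟨μ, ⟨hμ₀μ, hμhalf⟩, hroot⟩ := intermediate_value_Ioo hμ₀half.le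
    (continuous_id.sub (continuous_charRhs α)).continuousOn hsign
  exact ⟨μ, ⟨hμ₀pos.trans hμ₀μ, hμhalf⟩, sub_eq_zero.mp hroot⟩
end

section
/- Let y : [0, ∞) → ℝ be continuous and bounded, suppose H : ℝ → ℝ is continuous with H(ξ) > 0 for all ξ ≠ 0, suppose H ∘ y is uniformly continuous on [0, ∞), and suppose sup_{t≥0} ∫_0^t H(y(τ)) dτ < ∞. Then y(t) → 0 as t → ∞. -/
/-!
Since `H ∘ y ≥ 0` has bounded primitive `F t = ∫₀ᵗ H (y τ) dτ`, the primitive converges, so the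
integrals of `H ∘ y` over windows `[t, t + δ]` tend to zero. Uniform continuity turns this into
`H (y t) → 0` (Barbalat's lemma). Finally `H` is bounded below by a positive constant on the compact
set `{ξ | ε ≤ |ξ| ≤ M}`, so `|y t| < ε` eventually.
-/

open Filter Topology Set MeasureTheory intervalIntegral Metric

lemma nonneg_of_pos_of_ne {X : Type*} [TopologicalSpace X] {H : X → ℝ} {x₀ : X}
    [(𝓝[≠] x₀).NeBot] (hH : ContinuousAt H x₀) (hpos : ∀ ξ, ξ ≠ x₀ → 0 < H ξ) (ξ : X) :
    0 ≤ H ξ := by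
  rcases eq_or_ne ξ x₀ with h | hξ
  · rw [h]
    exact ge_of_tendsto (hH.tendsto.mono_left (nhdsWithin_le_nhds (s := {x₀}ᶜ)))
      (eventually_nhdsWithin_of_forall fun ξ hξ => (hpos ξ hξ).le)
  · exact (hpos ξ hξ).le

lemma tendsto_intervalIntegral_of_nonneg_of_le {f : ℝ → ℝ} {a C : ℝ}
    (hf : ContinuousOn f (Ici a)) (hf_nonneg : ∀ t ≥ a, 0 ≤ f t)
    (hC : ∀ t ≥ a, ∫ x in a..t, f x ≤ C) :
    Tendsto (fun t => ∫ x in a..t, f x) atTop (𝓝 (∫ x in Ioi a, f x)) := by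
  have hint : ∀ t, IntegrableOn f (Ioc a t) := fun t =>
    ((hf.mono Icc_subset_Ici_self).integrableOn_Icc).mono_set Ioc_subset_Icc_self
  refine intervalIntegral_tendsto_integral_Ioi a ?_ tendsto_id
  refine integrableOn_Ioi_of_intervalIntegral_norm_bounded C a hint tendsto_id ?_
  filter_upwards [eventually_ge_atTop a] with t ht
  calc ∫ x in a..t, ‖f x‖ = ∫ x in a..t, f x := integral_congr fun x hx =>
        Real.norm_of_nonneg (hf_nonneg x (by rw [uIcc_of_le ht] at hx; exact hx.1))
    _ ≤ C := hC t ht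

lemma tendsto_intervalIntegral_add_const_of_tendsto {f : ℝ → ℝ} {a L : ℝ} (δ : ℝ)
    (hf : ∀ t ≥ a, IntervalIntegrable f volume a t)
    (hF : Tendsto (fun t => ∫ x in a..t, f x) atTop (𝓝 L)) :
    Tendsto (fun t => ∫ x in t..t + δ, f x) atTop (𝓝 0) := by
  have hshift : Tendsto (fun t => ∫ x in a..t + δ, f x) atTop (𝓝 L) :=
    hF.comp (tendsto_atTop_add_const_right _ δ tendsto_id)
  refine (sub_self L ▸ hshift.sub hF).congr' ?_
  filter_upwards [eventually_ge_atTop a, eventually_ge_atTop (a - δ)] with t ht htδ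
  exact integral_interval_sub_left (hf _ (by linarith)) (hf t ht)

lemma mul_abs_le_abs_intervalIntegral_add {f : ℝ → ℝ} {t δ η : ℝ} (hδ : 0 ≤ δ)
    (hf : IntervalIntegrable f volume t (t + δ)) (hη : ∀ s ∈ Icc t (t + δ), |f s - f t| ≤ η) :
    δ * |f t| ≤ |∫ s in t..t + δ, f s| + δ * η := by
  have hsplit : δ * f t = (∫ s in t..t + δ, f s) - ∫ s in t..t + δ, (f s - f t) := by
    rw [integral_sub hf intervalIntegrable_const, intervalIntegral.integral_const, smul_eq_mul]
    ring
  have hdev : ‖∫ s in t..t + δ, (f s - f t)‖ ≤ η * |t + δ - t| :=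
    norm_integral_le_of_norm_le_const fun s hs =>
      hη s (by rw [uIoc_of_le (by linarith)] at hs; exact Ioc_subset_Icc_self hs)
  rw [Real.norm_eq_abs, add_sub_cancel_left, abs_of_nonneg hδ] at hdev
  calc δ * |f t| = |δ * f t| := by rw [abs_mul, abs_of_nonneg hδ]
    _ ≤ |∫ s in t..t + δ, f s| + |∫ s in t..t + δ, (f s - f t)| := hsplit ▸ abs_sub _ _
    _ ≤ |∫ s in t..t + δ, f s| + δ * η := by linarith

/-- Barbalat's lemma. -/
theorem tendsto_zero_of_uniformContinuousOn_of_tendsto_intervalIntegral {f : ℝ → ℝ} {a L : ℝ}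
    (hf : UniformContinuousOn f (Ici a))
    (hF : Tendsto (fun t => ∫ x in a..t, f x) atTop (𝓝 L)) : Tendsto f atTop (𝓝 0) := by
  have hint : ∀ t ≥ a, ∀ u ≥ a, IntervalIntegrable f volume t u := fun t ht u hu =>
    (hf.continuousOn.mono fun x hx => (le_min ht hu).trans hx.1).intervalIntegrable
  rw [Metric.tendsto_atTop]
  intro ε hε
  obtain ⟨δ, hδ, hfδ⟩ := uniformContinuousOn_iff_le.1 hf (ε / 2) (half_pos hε)
  have hwindow := (tendsto_intervalIntegral_add_const_of_tendsto δ (hint a le_rfl) hF).eventually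
    (ball_mem_nhds 0 (by positivity : 0 < δ * (ε / 2)))
  obtain ⟨N, hN⟩ := eventually_atTop.1 (hwindow.and (eventually_ge_atTop a))
  refine ⟨N, fun t ht => ?_⟩
  obtain ⟨hWt, hat⟩ := hN t ht
  have hclose : ∀ s ∈ Icc t (t + δ), |f s - f t| ≤ ε / 2 := fun s hs =>
    hfδ s (hat.trans hs.1) t hat <| by
      rw [Real.dist_eq, abs_of_nonneg (by linarith [hs.1])]
      linarith [hs.2]
  have hbound := mul_abs_le_abs_intervalIntegral_add hδ.le (hint t hat _ (by linarith)) hclose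
  rw [Real.dist_eq, sub_zero] at hWt ⊢
  exact lt_of_mul_lt_mul_left (by linarith : δ * |f t| < δ * ε) hδ.le

theorem tendsto_zero_of_tendsto_comp_zero {α E : Type*} [NormedAddCommGroup E] [ProperSpace E]
    {l : Filter α} {y : α → E} {H : E → ℝ} {M : ℝ} (hH : Continuous H)
    (hpos : ∀ ξ, ξ ≠ 0 → 0 < H ξ) (hy : ∀ᶠ t in l, ‖y t‖ ≤ M)
    (hHy : Tendsto (fun t => H (y t)) l (𝓝 0)) : Tendsto y l (𝓝 0) := by
  rw [Metric.tendsto_nhds]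
  intro ε hε
  have hK : IsCompact (closedBall (0 : E) M \ ball 0 ε) :=
    (isCompact_closedBall 0 M).diff isOpen_ball
  obtain ⟨m, hm, hmK⟩ := hK.exists_forall_le' hH.continuousOn (a := 0) fun ξ hξ =>
    hpos ξ fun h => hξ.2 (h ▸ mem_ball_self hε)
  filter_upwards [hy, hHy.eventually (gt_mem_nhds hm)] with t hyt hHt
  by_contra h
  exact (hmK (y t) ⟨mem_closedBall_zero_iff.2 hyt, h⟩).not_gt hHt

theorem decay_from_integral_bound_general (y : ℝ → ℝ) (H : ℝ → ℝ)
    (hy_bdd : ∃ M, ∀ t ≥ (0 : ℝ), |y t| ≤ M)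
    (hH_cont : Continuous H) (hH_pos : ∀ ξ : ℝ, ξ ≠ 0 → 0 < H ξ)
    (hHy_uc : UniformContinuousOn (fun t => H (y t)) (Set.Ici 0))
    (hbound : ∃ C : ℝ, ∀ t ≥ (0 : ℝ), ∫ τ in (0 : ℝ)..t, H (y τ) ≤ C) :
    Filter.Tendsto y Filter.atTop (nhds 0) := by
  obtain ⟨M, hM⟩ := hy_bdd
  obtain ⟨C, hC⟩ := hbound
  have hH_nonneg := nonneg_of_pos_of_ne hH_cont.continuousAt hH_pos
  have hF := tendsto_intervalIntegral_of_nonneg_of_le hHy_uc.continuousOn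
    (fun t _ => hH_nonneg (y t)) hC
  have hHy := tendsto_zero_of_uniformContinuousOn_of_tendsto_intervalIntegral hHy_uc hF
  exact tendsto_zero_of_tendsto_comp_zero hH_cont hH_pos (eventually_atTop.2 ⟨0, hM⟩) hHy

theorem decay_from_integral_bound (y : ℝ → ℝ) (H : ℝ → ℝ)
    (hy_cont : ContinuousOn y (Set.Ici 0)) (hy_bdd : ∃ M, ∀ t ≥ (0 : ℝ), |y t| ≤ M)
    (hH_cont : Continuous H) (hH_pos : ∀ ξ : ℝ, ξ ≠ 0 → 0 < H ξ)
    (hHy_uc : UniformContinuousOn (fun t => H (y t)) (Set.Ici 0))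
    (hbound : ∃ C : ℝ, ∀ t ≥ (0 : ℝ), ∫ τ in (0 : ℝ)..t, H (y τ) ≤ C) :
    Filter.Tendsto y Filter.atTop (nhds 0) :=
  decay_from_integral_bound_general y H hy_bdd hH_cont hH_pos hHy_uc hbound
end

section
/- For ω > 0 with ω real, the condition Im(1/(√(iω)·sinh(π√(iω)))) = 0 is equivalent to sinh(π√(ω/2))·cos(π√(ω/2)) + cosh(π√(ω/2))·sin(π√(ω/2)) = 0, i.e. to tan(π√(ω/2)) = −tanh(π√(ω/2)). -/
open Complex

/-!
With `s = √(ω/2)` the principal root is `√(iω) = s(1 + i)`, and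
`sinh(πs(1 + i)) = sinh(πs) cos(πs) + i cosh(πs) sin(πs)`. Since `Im z⁻¹ = -Im z / |z|²`,
the imaginary part of `G₊(iω)` vanishes exactly when that of `√(iω) sinh(π√(iω))` does, which is
`s` times the sum of the real and imaginary parts of the sinh factor. Dividing that sum by
`cosh(πs) cos(πs)` gives the tangent form; where `cos(πs) = 0`, neither side holds.
-/

namespace Complex

theorem inv_im_eq_zero_iff (z : ℂ) : z⁻¹.im = 0 ↔ z.im = 0 := by
  rcases eq_or_ne z 0 with rfl | hz
  · simp
  · rw [inv_im, div_eq_zero_iff, neg_eq_zero, or_iff_left (normSq_pos.2 hz).ne']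

theorem cpow_one_half_I_mul_ofReal {ω : ℝ} (hω : 0 < ω) :
    (I * ω) ^ (1 / 2 : ℂ) = (√(ω / 2) : ℂ) * (1 + I) := by
  have hsq : I * ω = ((√(ω / 2) : ℂ) * (1 + I)) ^ 2 := by
    have hs : ((√(ω / 2) : ℝ) : ℂ) ^ 2 = ω / 2 := by
      rw [← ofReal_pow, Real.sq_sqrt (by positivity), ofReal_div, ofReal_ofNat]
    linear_combination (-2 * I) * hs - ((√(ω / 2) : ℝ) : ℂ) ^ 2 * I_sq
  rw [hsq, one_div, sq_cpow_two_inv]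
  simpa using Real.sqrt_pos.2 (half_pos hω)

theorem sinh_ofReal_mul_one_add_I (x : ℝ) :
    sinh (x * (1 + I)) = (Real.sinh x * Real.cos x : ℝ) + (Real.cosh x * Real.sin x : ℝ) * I := by
  rw [mul_one_add, sinh_add, sinh_mul_I, cosh_mul_I]
  push_cast
  ring

theorem im_ofReal_mul_one_add_I_mul (s : ℝ) (z : ℂ) :
    ((s : ℂ) * (1 + I) * z).im = s * (z.re + z.im) := by
  simp only [mul_im, mul_re, add_re, add_im, ofReal_re, ofReal_im, one_re, one_im, I_re, I_im]
  ring

end Complex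

theorem Real.sinh_mul_cos_add_cosh_mul_sin_eq_zero_iff (x : ℝ) :
    sinh x * cos x + cosh x * sin x = 0 ↔ tan x = -tanh x := by
  rw [tan_eq_sin_div_cos, tanh_eq_sinh_div_cosh]
  have hcosh : cosh x ≠ 0 := (cosh_pos x).ne'
  by_cases hcos : cos x = 0
  · have hsin : sin x ≠ 0 := by
      intro hsin
      simpa [hsin, hcos] using sin_sq_add_cos_sq x
    -- Here `tan x` takes its junk value `0`, while `tanh x ≠ 0`.
    have hx : x ≠ 0 := by
      rintro rfl
      simp at hcos
    simp [hcos, hsin, hcosh, hx]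
  · rw [div_eq_iff hcos]
    field_simp
    constructor <;> intro h <;> linarith

theorem nyquist_real_crossing (ω : ℝ) (hω : 0 < ω) :
    ((1 / (((Complex.I * ω) ^ (1 / 2 : ℂ)) *
        Complex.sinh (Real.pi * (Complex.I * ω) ^ (1 / 2 : ℂ)))).im = 0 ↔
      Real.sinh (Real.pi * Real.sqrt (ω / 2)) * Real.cos (Real.pi * Real.sqrt (ω / 2)) +
        Real.cosh (Real.pi * Real.sqrt (ω / 2)) * Real.sin (Real.pi * Real.sqrt (ω / 2)) = 0) ∧
    (Real.sinh (Real.pi * Real.sqrt (ω / 2)) * Real.cos (Real.pi * Real.sqrt (ω / 2)) +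
        Real.cosh (Real.pi * Real.sqrt (ω / 2)) * Real.sin (Real.pi * Real.sqrt (ω / 2)) = 0 ↔
      Real.tan (Real.pi * Real.sqrt (ω / 2)) = -Real.tanh (Real.pi * Real.sqrt (ω / 2))) := by
  refine ⟨?_, Real.sinh_mul_cos_add_cosh_mul_sin_eq_zero_iff _⟩
  have hs : √(ω / 2) ≠ 0 := (Real.sqrt_pos.2 (half_pos hω)).ne'
  rw [cpow_one_half_I_mul_ofReal hω, ← mul_assoc, ← ofReal_mul, sinh_ofReal_mul_one_add_I,
    one_div, inv_im_eq_zero_iff, im_ofReal_mul_one_add_I_mul]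
  simp only [add_re, add_im, ofReal_re, ofReal_im, re_ofReal_mul, im_ofReal_mul, I_re, I_im,
    mul_zero, mul_one, add_zero, zero_add, mul_eq_zero, hs, false_or]
end
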